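/- Let r > 0, let (x_n) be a sequence in an S-metric space (X,S), and let c be a statistical cluster point of (x_n). Then st-LIM^r x_n ⊆ B_S[c,r], the closed ball of radius r centered at c. -/

import Mathlib

open Filter

open scoped Classical in
/-- Natural density: `A ⊆ ℕ` has density `d` if `|{k ∈ A : k < n}|/n → d`. -/
def HasDensity (A : Set ℕ) (d : ℝ) : Prop :=
  Filter.Tendsto
    (fun n : ℕ => (((Finset.range n).filter (fun k => k ∈ A)).card : ℝ) / n)
    Filter.atTop (nhds d)

/-- `S` is an S-metric on `X`. -/
structure IsSMetric {X : Type*} (S : X → X → X → ℝ) : Prop where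
  nonneg : ∀ x y z, 0 ≤ S x y z
  eq_zero_iff : ∀ x y z, S x y z = 0 ↔ x = y ∧ y = z
  triangle : ∀ x y z a, S x y z ≤ S x x a + S y y a + S z z a

/-- Ordinary convergence of a sequence in an S-metric space. -/
def SConvergesTo {X : Type*} (S : X → X → X → ℝ) (x : ℕ → X) (l : X) : Prop :=
  ∀ ε : ℝ, 0 < ε → ∃ N : ℕ, ∀ n ≥ N, S (x n) (x n) l < ε

/-- Statistical convergence of a sequence in an S-metric space. -/
def SStatConvergesTo {X : Type*} (S : X → X → X → ℝ) (x : ℕ → X) (l : X) : Prop :=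
  ∀ ε : ℝ, 0 < ε → HasDensity {n : ℕ | ε ≤ S (x n) (x n) l} 0

/-- Cauchy sequence in an S-metric space. -/
def SCauchy {X : Type*} (S : X → X → X → ℝ) (x : ℕ → X) : Prop :=
  ∀ ε : ℝ, 0 < ε → ∃ k : ℕ, ∀ n ≥ k, ∀ m ≥ k, S (x n) (x n) (x m) < ε

/-- Statistically Cauchy sequence in an S-metric space. -/
def SStatCauchy {X : Type*} (S : X → X → X → ℝ) (x : ℕ → X) : Prop :=
  ∀ ε : ℝ, 0 < ε → ∃ N : ℕ, HasDensity {n : ℕ | ε ≤ S (x n) (x n) (x N)} 0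

/-- Statistically bounded sequence in an S-metric space. -/
def SStatBounded {X : Type*} (S : X → X → X → ℝ) (x : ℕ → X) : Prop :=
  ∀ u : X, ∃ B : ℝ, 0 < B ∧ HasDensity {n : ℕ | B ≤ S (x n) (x n) u} 0

/-- Rough convergence with roughness degree `r`. -/
def SRoughConvergesTo {X : Type*} (S : X → X → X → ℝ) (r : ℝ) (x : ℕ → X) (p : X) : Prop :=
  ∀ ε : ℝ, 0 < ε → ∃ k : ℕ, ∀ n ≥ k, S (x n) (x n) p < r + ε

/-- Rough statistical convergence with roughness degree `r`. -/
def SRoughStatConvergesTo {X : Type*} (S : X → X → X → ℝ) (r : ℝ) (x : ℕ → X) (p : X) : Prop :=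
  ∀ ε : ℝ, 0 < ε → HasDensity {n : ℕ | r + ε ≤ S (x n) (x n) p} 0

/-- The rough statistical limit set `st-LIM^r x_n`. -/
def stLIM {X : Type*} (S : X → X → X → ℝ) (r : ℝ) (x : ℕ → X) : Set X :=
  {p : X | SRoughStatConvergesTo S r x p}

/-- The topology on `X` generated by the open balls of the S-metric. -/
def sBallTopology {X : Type*} (S : X → X → X → ℝ) : TopologicalSpace X :=
  TopologicalSpace.generateFrom
    {B : Set X | ∃ c : X, ∃ ε : ℝ, 0 < ε ∧ B = {y : X | S y y c < ε}}

/-! If `S y y c > r`, put `ε = (S y y c - r) / 3`. By the triangle inequality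
`S y y c ≤ S (x n) (x n) y + 2 S (x n) (x n) c`, every index with `S (x n) (x n) c < ε` has
`S (x n) (x n) y ≥ r + ε`. The latter set has density zero since `y ∈ st-LIM^r x_n`,
contradicting that `c` is a statistical cluster point. -/

open scoped Classical in
lemma HasDensity.zero_mono {A B : Set ℕ} (hB : HasDensity B 0) (hAB : A ⊆ B) :
    HasDensity A 0 := by
  refine squeeze_zero (fun n => by positivity) (fun n => ?_) hB
  gcongr

namespace IsSMetric

variable {X : Type*} {S : X → X → X → ℝ}

lemma self_self_self (hS : IsSMetric S) (a : X) : S a a a = 0 :=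
  (hS.eq_zero_iff a a a).mpr ⟨rfl, rfl⟩

lemma symm (hS : IsSMetric S) (a b : X) : S a a b = S b b a := by
  have hab := hS.triangle a a b a
  have hba := hS.triangle b b a b
  rw [hS.self_self_self] at hab hba
  linarith

lemma le_add_two_mul (hS : IsSMetric S) (a b y : X) : S a a b ≤ S y y a + 2 * S y y b := by
  have := hS.triangle b b a y
  rw [hS.symm b a, hS.symm b y, hS.symm a y] at this
  linarith

end IsSMetric

theorem stmt_19_general {X : Type*} (S : X → X → X → ℝ) (hS : IsSMetric S)
    (r : ℝ) (x : ℕ → X) (c : X)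
    (hc : ∀ ε : ℝ, 0 < ε → ¬ HasDensity {n : ℕ | S (x n) (x n) c < ε} 0) :
    stLIM S r x ⊆ {y : X | S y y c ≤ r} := by
  intro y hy
  by_contra hfar
  replace hfar : r < S y y c := not_le.mp hfar
  set ε := (S y y c - r) / 3 with hε_def
  have hε : 0 < ε := by linarith
  refine hc ε hε ((hy ε hε).zero_mono fun n (hn : S (x n) (x n) c < ε) => ?_)
  show r + ε ≤ S (x n) (x n) y
  have := hS.le_add_two_mul y c (x n)
  linarith

theorem stmt_19 {X : Type*} [Nonempty X] (S : X → X → X → ℝ) (hS : IsSMetric S)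
    (r : ℝ) (hr : 0 < r) (x : ℕ → X) (c : X)
    (hc : ∀ ε : ℝ, 0 < ε → ¬ HasDensity {n : ℕ | S (x n) (x n) c < ε} 0) :
    stLIM S r x ⊆ {y : X | S y y c ≤ r} :=
  stmt_19_general S hS r x c hc
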